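/- Let (𝐬, r(𝐬)) ∈ 𝒮 be connected with r(𝐬) = (1, r_1, r_2) (so k = 2, r = r_2, r_0 = 1), and let ε ∈ {0,1}. If i_{r_1−1+2ε} < i_{r_1+1−2ε}, then there exists p_1 with r_ε + ε ≤ p_1 < r_{1+ε} + ε such that i_{p_1} ≤ i_s < j_s ≤ j_{p_1} for all s with r_{1−ε} − ε < s ≤ r_{2−ε} − ε, and, whenever the index p_1 − 1 + 2ε lies in {1, …, r_2}, the following hold: if 𝐬(0,r_1) ∈ S_→ then j_{p_1−1+2ε} < i_{r_{2−2ε}}, and if 𝐬(0,r_1) ∈ S_← then j_{r_{2−2ε}} < i_{p_1−1+2ε} (here r_{2−2ε} means r_2 when ε = 0 and r_0 = 1 when ε = 1). -/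

import Mathlib

namespace AltSnakePaper

/-- `[i,j] ∈ 𝕀ₙ`: the interval condition `0 ≤ j - i ≤ n + 1`. -/
def InIn (n : ℕ) (i j : ℤ) : Prop := 0 ≤ j - i ∧ j - i ≤ (n : ℤ) + 1

/-- The intervals `[i1,j1]` and `[i2,j2]` overlap. -/
def Overlap (i1 j1 i2 j2 : ℤ) : Prop :=
  (i1 < i2 ∧ i2 ≤ j1 ∧ j1 < j2) ∨ (i2 < i1 ∧ i1 ≤ j2 ∧ j2 < j1)

/-- The pair `([i1,j1],[i2,j2])` is connected. -/
def ConnPair (n : ℕ) (i1 j1 i2 j2 : ℤ) : Prop :=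
  Overlap i1 j1 i2 j2 ∧ InIn n i1 j2 ∧ InIn n i2 j1

/-- The subtuple `𝐬(a,b)` (entries with indices `a+1, …, b`) lies in `S_→`. -/
def SRight (ii jj : ℕ → ℤ) (a b : ℕ) : Prop :=
  ∀ s, a + 1 ≤ s → s + 1 ≤ b → ii s < ii (s + 1) ∧ jj s < jj (s + 1)

/-- The subtuple `𝐬(a,b)` (entries with indices `a+1, …, b`) lies in `S_←`. -/
def SLeft (ii jj : ℕ → ℤ) (a b : ℕ) : Prop :=
  ∀ s, a + 1 ≤ s → s + 1 ≤ b → ii (s + 1) < ii s ∧ jj (s + 1) < jj s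

/-- `(𝐬, r(𝐬))` is an alternating snake, where `𝐬 = ([i_1,j_1],…,[i_r,j_r])`
(encoded by `ii jj : ℕ → ℤ`, entries indexed `1,…,r`) and
`r(𝐬) = (r_0, r_1, …, r_k)` (encoded by `rr : ℕ → ℕ`). -/
structure IsAltSnake (n r k : ℕ) (rr : ℕ → ℕ) (ii jj : ℕ → ℤ) : Prop where
  hr : 1 ≤ r
  hk : k ≤ r
  mem : ∀ s, 1 ≤ s → s ≤ r → InIn n (ii s) (jj s)
  distinct : ∀ s p, 1 ≤ s → s ≤ r → 1 ≤ p → p ≤ r → s ≠ p → ii s ≠ ii p ∨ jj s ≠ jj p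
  rr0 : rr 0 = 1
  rrk : rr k = r
  rrmono : ∀ m, m < k → rr m < rr (m + 1)
  mono : ∀ m, 1 ≤ m → m ≤ k →
      SRight ii jj (rr (m - 1) - 1) (rr m) ∨ SLeft ii jj (rr (m - 1) - 1) (rr m)
  alt : ∀ m, 1 ≤ m → m < k →
      (SRight ii jj (rr (m - 1) - 1) (rr m) ↔ SLeft ii jj (rr m - 1) (rr (m + 1)))
  nonoverlap : ∀ m s t, 1 ≤ m → m < k → 1 ≤ s → s < rr m → rr m < t → t ≤ r →
      ¬ Overlap (ii s) (jj s) (ii t) (jj t)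

/-- The subtuple `𝐬(a,b)` is connected: all consecutive pairs are connected. -/
def SegConnected (n : ℕ) (ii jj : ℕ → ℤ) (a b : ℕ) : Prop :=
  ∀ s, a + 1 ≤ s → s + 1 ≤ b → ConnPair n (ii s) (jj s) (ii (s + 1)) (jj (s + 1))

/-- The subtuple `𝐬(a,b)` (with its induced r-vector, whose internal break points
are the `rr m` with `a + 1 < rr m < b`) is prime. -/
def SegPrime (n k : ℕ) (rr : ℕ → ℕ) (ii jj : ℕ → ℤ) (a b : ℕ) : Prop :=
  SegConnected n ii jj a b ∧
    ∀ m, 1 ≤ m → m < k → a + 1 < rr m → rr m < b →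
      ii (rr m - 1) ≠ ii (rr m + 1) ∧ jj (rr m - 1) ≠ jj (rr m + 1)

/-- The subtuple `𝐬(a,b)` (with its induced r-vector) is stable. -/
def SegStable (k : ℕ) (rr : ℕ → ℕ) (ii jj : ℕ → ℤ) (a b : ℕ) : Prop :=
  ∀ m, 1 ≤ m → m < k → a + 1 < rr m → rr m < b →
    (ii (rr m + 1) < ii (rr m - 1) → jj (rr m + 1) < ii (rr m - 1)) ∧
    (jj (rr m - 1) < jj (rr m + 1) → jj (rr m - 1) < ii (rr m + 1))

/-- The alternating snake is stable. -/
def Stable (k : ℕ) (rr : ℕ → ℕ) (ii jj : ℕ → ℤ) : Prop :=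
  ∀ m, 1 ≤ m → m < k →
    (ii (rr m + 1) < ii (rr m - 1) → jj (rr m + 1) < ii (rr m - 1)) ∧
    (jj (rr m - 1) < jj (rr m + 1) → jj (rr m - 1) < ii (rr m + 1))

/-- The boundary condition allowing a cut of the snake at `p = rr m - ε`:
`a_{r_m-1} = a_{r_m+1}` for some `a ∈ {i, j}`, with `ε ∈ {0,1}` chosen so that, `b`
denoting the other member of `{i,j}`, one has `b_{r_m−1+2ε} < b_{r_m+1−2ε}` if
`𝐬(r_m−2, r_m) ∈ S_←` and `b_{r_m+1−2ε} < b_{r_m−1+2ε}` if `𝐬(r_m−2, r_m) ∈ S_→`. -/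
def BoundaryCond (k : ℕ) (rr : ℕ → ℕ) (ii jj : ℕ → ℤ) (m ε : ℕ) : Prop :=
  (ii (rr m - 1) = ii (rr m + 1) ∧
    (SLeft ii jj (rr m - 2) (rr m) → jj (rr m - 1 + 2 * ε) < jj (rr m + 1 - 2 * ε)) ∧
    (SRight ii jj (rr m - 2) (rr m) → jj (rr m + 1 - 2 * ε) < jj (rr m - 1 + 2 * ε))) ∨
  (jj (rr m - 1) = jj (rr m + 1) ∧
    (SLeft ii jj (rr m - 2) (rr m) → ii (rr m - 1 + 2 * ε) < ii (rr m + 1 - 2 * ε)) ∧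
    (SRight ii jj (rr m - 2) (rr m) → ii (rr m + 1 - 2 * ε) < ii (rr m - 1 + 2 * ε)))

/-- `p` is an admissible cut point for the prime decomposition. -/
def CutAt (n r k : ℕ) (rr : ℕ → ℕ) (ii jj : ℕ → ℤ) (p : ℕ) : Prop :=
  p = r ∨
  ¬ ConnPair n (ii p) (jj p) (ii (p + 1)) (jj (p + 1)) ∨
  ∃ m ε, 1 ≤ m ∧ m < k ∧ ε ≤ 1 ∧ p = rr m - ε ∧ BoundaryCond k rr ii jj m ε

/-- `0 = c 0 < c 1 < ⋯ < c L = r` are the cut points of a prime decomposition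
of the snake, the prime factors being the segments `𝐬(c t, c (t+1))`. -/
def IsPrimeDecomp (n r k : ℕ) (rr : ℕ → ℕ) (ii jj : ℕ → ℤ) (c : ℕ → ℕ) (L : ℕ) : Prop :=
  1 ≤ L ∧ c 0 = 0 ∧ c L = r ∧ (∀ t, t < L → c t < c (t + 1)) ∧
  (∀ t, t < L → SegPrime n k rr ii jj (c t) (c (t + 1))) ∧
  (∀ t, 1 ≤ t → t ≤ L → CutAt n r k rr ii jj (c t))

/-- The segment `𝐬(a,b)` is contained in a prime factor of `𝐬`. -/
def ContainedInPF (n r k : ℕ) (rr : ℕ → ℕ) (ii jj : ℕ → ℤ) (a b : ℕ) : Prop :=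
  ∃ c L t, IsPrimeDecomp n r k rr ii jj c L ∧ t < L ∧ c t ≤ a ∧ b ≤ c (t + 1)


/-!
Write `a = r_1`. The snake turns once, at `a`: along `𝐬(0,a)` the intervals move one way and
along `𝐬(a-1,r)` the other way. Reflecting the line, `[i,j] ↦ [-j,-i]`, turns a snake falling
into `a` into one rising into `a`, and reading the snake backwards exchanges `ε = 0` and `ε = 1`.
So it suffices to treat a peak at `a` with `ε = 0`. The intervals `a - 1` and `a + 1` both
contain `i_a` and do not overlap, so they are nested, and `i_{a-1} < i_{a+1}` forces
`[i_{a+1}, j_{a+1}] ⊆ [i_{a-1}, j_{a-1}]`. Since consecutive intervals overlap, the falling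
arm after `a` can never get past `i_{a-1}` without overlapping `a - 1`, so it stays inside
`a - 1`; then `p_1` is the first index of the rising arm with `j_{a+1} ≤ j_{p_1}`, and the
same non-overlap argument keeps the falling arm to the right of `j_{p_1 - 1}`.
-/

theorem Overlap.symm {i₁ j₁ i₂ j₂ : ℤ} (h : Overlap i₁ j₁ i₂ j₂) : Overlap i₂ j₂ i₁ j₁ :=
  Or.symm h

theorem overlap_neg_swap_iff {i₁ j₁ i₂ j₂ : ℤ} :
    Overlap (-j₁) (-i₁) (-j₂) (-i₂) ↔ Overlap i₁ j₁ i₂ j₂ := by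
  unfold Overlap
  omega

theorem SRight.strictMonoOn {ii jj : ℕ → ℤ} {a b : ℕ} (h : SRight ii jj a b) :
    StrictMonoOn ii (Set.Icc (a + 1) b) ∧ StrictMonoOn jj (Set.Icc (a + 1) b) :=
  ⟨strictMonoOn_of_lt_add_one Set.ordConnected_Icc fun s _ hs hs' => (h s hs.1 hs'.2).1,
    strictMonoOn_of_lt_add_one Set.ordConnected_Icc fun s _ hs hs' => (h s hs.1 hs'.2).2⟩

theorem SLeft.strictAntiOn {ii jj : ℕ → ℤ} {a b : ℕ} (h : SLeft ii jj a b) :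
    StrictAntiOn ii (Set.Icc (a + 1) b) ∧ StrictAntiOn jj (Set.Icc (a + 1) b) :=
  ⟨strictAntiOn_of_add_one_lt Set.ordConnected_Icc fun s _ hs hs' => (h s hs.1 hs'.2).1,
    strictAntiOn_of_add_one_lt Set.ordConnected_Icc fun s _ hs hs' => (h s hs.1 hs'.2).2⟩

theorem SRight.not_sLeft {ii jj : ℕ → ℤ} {a b : ℕ} (h : SRight ii jj a b) (hab : a + 2 ≤ b) :
    ¬ SLeft ii jj a b := fun h' => by
  have := (h (a + 1) le_rfl hab).1
  have := (h' (a + 1) le_rfl hab).1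
  omega

structure PeakSnake (r a : ℕ) (lo hi : ℕ → ℤ) : Prop where
  one_lt : 1 < a
  lt : a < r
  lo_strictMonoOn : StrictMonoOn lo (Set.Icc 1 a)
  hi_strictMonoOn : StrictMonoOn hi (Set.Icc 1 a)
  lo_strictAntiOn : StrictAntiOn lo (Set.Icc a r)
  hi_strictAntiOn : StrictAntiOn hi (Set.Icc a r)
  overlap : ∀ s, 1 ≤ s → s < r → Overlap (lo s) (hi s) (lo (s + 1)) (hi (s + 1))
  not_overlap : ∀ s t, 1 ≤ s → s < a → a < t → t ≤ r → ¬ Overlap (lo s) (hi s) (lo t) (hi t)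

namespace PeakSnake

variable {r a : ℕ} {lo hi : ℕ → ℤ}

theorem reverse (hS : PeakSnake r a lo hi) :
    PeakSnake r (r + 1 - a) (fun s => lo (r + 1 - s)) (fun s => hi (r + 1 - s)) := by
  obtain ⟨ha, har, hloM, hhiM, hloA, hhiA, hov, hnov⟩ := hS
  refine ⟨by omega, by omega, ?_, ?_, ?_, ?_, ?_, ?_⟩
  · exact fun s ⟨_, _⟩ t ⟨_, _⟩ _ => hloA ⟨by omega, by omega⟩ ⟨by omega, by omega⟩ (by omega)
  · exact fun s ⟨_, _⟩ t ⟨_, _⟩ _ => hhiA ⟨by omega, by omega⟩ ⟨by omega, by omega⟩ (by omega)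
  · exact fun s ⟨_, _⟩ t ⟨_, _⟩ _ => hloM ⟨by omega, by omega⟩ ⟨by omega, by omega⟩ (by omega)
  · exact fun s ⟨_, _⟩ t ⟨_, _⟩ _ => hhiM ⟨by omega, by omega⟩ ⟨by omega, by omega⟩ (by omega)
  · intro s hs hsr
    have := (hov (r - s) (by omega) (by omega)).symm
    rwa [show r - s + 1 = r + 1 - s by omega, show r - s = r + 1 - (s + 1) by omega] at this
  · intro s t hs hsa hat htr hst
    exact hnov (r + 1 - t) (r + 1 - s) (by omega) (by omega) (by omega) (by omega) hst.symm

theorem lo_lt_hi (hS : PeakSnake r a lo hi) {s : ℕ} (hs : 1 ≤ s) (hsr : s ≤ r) : lo s < hi s := by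
  rcases Nat.lt_or_ge s r with h | h
  · have := hS.overlap s hs h
    unfold Overlap at this
    omega
  · have := hS.overlap (s - 1) (by have := hS.lt; have := hS.one_lt; omega) (by omega)
    rw [Nat.sub_add_cancel (by omega)] at this
    unfold Overlap at this
    omega

/-- Both neighbours of the peak contain `lo a`; as they do not overlap, they are nested. -/
theorem nested_or (hS : PeakSnake r a lo hi) :
    (lo (a - 1) ≤ lo (a + 1) ∧ hi (a + 1) ≤ hi (a - 1)) ∨
      (lo (a + 1) ≤ lo (a - 1) ∧ hi (a - 1) ≤ hi (a + 1)) := by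
  have ha := hS.one_lt
  have har := hS.lt
  have h₁ := hS.overlap (a - 1) (by omega) (by omega)
  have h₂ := hS.overlap a (by omega) har
  have hlo₁ : lo (a - 1) < lo a :=
    hS.lo_strictMonoOn ⟨by omega, by omega⟩ ⟨by omega, le_rfl⟩ (by omega)
  have hlo₂ : lo (a + 1) < lo a := hS.lo_strictAntiOn ⟨le_rfl, har.le⟩ ⟨by omega, har⟩ (by omega)
  have hno := hS.not_overlap (a - 1) (a + 1) (by omega) (by omega) (by omega) har
  rw [Nat.sub_add_cancel (by omega)] at h₁
  unfold Overlap at h₁ h₂ hno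
  omega

/-- The falling arm moves left one overlap at a time, so it cannot get past the interval `q`
without overlapping it. -/
theorem hi_lt_lo_of_forall_lo_lt (hS : PeakSnake r a lo hi) {q : ℕ} (hq : 1 ≤ q) (hqa : q < a)
    (hhi : hi q < hi (a + 1)) (hlo : ∀ t, a < t → t ≤ r → lo q < lo t) {t : ℕ} (hat : a < t)
    (htr : t ≤ r) : hi q < lo t := by
  induction t, hat using Nat.le_induction with
  | base =>
    show hi q < lo (a + 1)
    have hno := hS.not_overlap q (a + 1) hq hqa (by omega) htr
    have := hlo (a + 1) (by omega) htr
    unfold Overlap at hno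
    omega
  | succ t hat ih =>
    have hov := hS.overlap t (by omega) (by omega)
    have hlo' : lo (t + 1) < lo t :=
      hS.lo_strictAntiOn ⟨by omega, by omega⟩ ⟨by omega, htr⟩ (by omega)
    have hno := hS.not_overlap q (t + 1) hq hqa (by omega) htr
    have := hlo (t + 1) (by omega) htr
    have := ih (by omega)
    unfold Overlap at hov hno
    omega

/-- The falling arm cannot get past `lo (a - 1)` without overlapping the interval `a - 1`. -/
theorem lo_pred_le_of_nested (hS : PeakSnake r a lo hi) (hlo : lo (a - 1) ≤ lo (a + 1))
    (hhi : hi (a + 1) ≤ hi (a - 1)) {t : ℕ} (hat : a < t) (htr : t ≤ r) : lo (a - 1) ≤ lo t := by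
  have ha := hS.one_lt
  induction t, hat using Nat.le_induction with
  | base => exact hlo
  | succ t hat ih =>
    have hov := hS.overlap t (by omega) (by omega)
    have hlo' : lo (t + 1) < lo t :=
      hS.lo_strictAntiOn ⟨by omega, by omega⟩ ⟨by omega, htr⟩ (by omega)
    have hhi' : hi (t + 1) < hi (a + 1) :=
      hS.hi_strictAntiOn ⟨by omega, by omega⟩ ⟨by omega, htr⟩ (by omega)
    have hno := hS.not_overlap (a - 1) (t + 1) (by omega) (by omega) (by omega) htr
    have := ih (by omega)
    unfold Overlap at hov hno
    omega

theorem exists_cover_before (hS : PeakSnake r a lo hi) (hlo : lo (a - 1) ≤ lo (a + 1))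
    (hhi : hi (a + 1) ≤ hi (a - 1)) : ∃ p, 1 ≤ p ∧ p < a ∧
    (∀ t, a < t → t ≤ r → lo p ≤ lo t ∧ lo t < hi t ∧ hi t ≤ hi p) ∧
    (1 < p → ∀ t, a < t → t ≤ r → hi (p - 1) < lo t) := by
  classical
  have ha := hS.one_lt
  have hex : ∃ p, 1 ≤ p ∧ hi (a + 1) ≤ hi p := ⟨a - 1, by omega, hhi⟩
  obtain ⟨hp, hp_hi⟩ := Nat.find_spec hex
  have hpa : Nat.find hex ≤ a - 1 := Nat.find_min' hex ⟨by omega, hhi⟩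
  set p := Nat.find hex
  have hcover : ∀ t, a < t → t ≤ r → lo p ≤ lo t ∧ lo t < hi t ∧ hi t ≤ hi p := by
    intro t hat htr
    have hlo_p : lo p ≤ lo (a - 1) :=
      hS.lo_strictMonoOn.monotoneOn ⟨hp, by omega⟩ ⟨by omega, by omega⟩ hpa
    have hhi_t : hi t ≤ hi (a + 1) :=
      hS.hi_strictAntiOn.antitoneOn ⟨by omega, by omega⟩ ⟨by omega, htr⟩ hat
    exact ⟨hlo_p.trans (hS.lo_pred_le_of_nested hlo hhi hat htr), hS.lo_lt_hi (by omega) htr,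
      hhi_t.trans hp_hi⟩
  refine ⟨p, hp, by omega, hcover, fun hp₁ t hat htr => ?_⟩
  have hhi_pred : hi (p - 1) < hi (a + 1) :=
    not_le.mp fun h => Nat.find_min hex (by omega : p - 1 < p) ⟨by omega, h⟩
  have hlo_pred : lo (p - 1) < lo p :=
    hS.lo_strictMonoOn ⟨by omega, by omega⟩ ⟨hp, by omega⟩ (by omega)
  exact hS.hi_lt_lo_of_forall_lo_lt (by omega) (by omega) hhi_pred
    (fun t hat htr => hlo_pred.trans_le (hcover t hat htr).1) hat htr

theorem exists_cover_after (hS : PeakSnake r a lo hi) (hlo : lo (a + 1) ≤ lo (a - 1))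
    (hhi : hi (a - 1) ≤ hi (a + 1)) : ∃ p, a < p ∧ p ≤ r ∧
      (∀ s, 1 ≤ s → s < a → lo p ≤ lo s ∧ lo s < hi s ∧ hi s ≤ hi p) ∧
      (p < r → ∀ s, 1 ≤ s → s < a → hi (p + 1) < lo s) := by
  have ha := hS.one_lt
  have har := hS.lt
  have e₁ : r + 1 - (r + 1 - a - 1) = a + 1 := by omega
  have e₂ : r + 1 - (r + 1 - a + 1) = a - 1 := by omega
  obtain ⟨p, hp, hpa, hcover, hbound⟩ :=
    hS.reverse.exists_cover_before (by simp only [e₁, e₂]; exact hlo)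
      (by simp only [e₁, e₂]; exact hhi)
  refine ⟨r + 1 - p, by omega, by omega, fun s hs hsa => ?_, fun hpr s hs hsa => ?_⟩
  · have := hcover (r + 1 - s) (by omega) (by omega)
    rwa [Nat.sub_sub_self (by omega)] at this
  · have := hbound (by omega) (r + 1 - s) (by omega) (by omega)
    rwa [Nat.sub_sub_self (by omega), show r + 1 - (p - 1) = r + 1 - p + 1 by omega] at this

end PeakSnake

namespace IsAltSnake

variable {n r : ℕ} {rr : ℕ → ℕ} {ii jj : ℕ → ℤ}

theorem peak_or_valley (h : IsAltSnake n r 2 rr ii jj) (hc : SegConnected n ii jj 0 r) :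
    (SRight ii jj 0 (rr 1) ∧ PeakSnake r (rr 1) ii jj) ∨
      (SLeft ii jj 0 (rr 1) ∧ PeakSnake r (rr 1) (fun s => -jj s) (fun s => -ii s)) := by
  have h₀₁ : rr 0 < rr 1 := h.rrmono 0 (by norm_num)
  have h₁₂ : rr 1 < rr 2 := h.rrmono 1 (by norm_num)
  have hr₂ : rr 2 = r := h.rrk
  rw [h.rr0] at h₀₁
  have hov : ∀ s, 1 ≤ s → s < r → Overlap (ii s) (jj s) (ii (s + 1)) (jj (s + 1)) :=
    fun s hs hsr => (hc s (by omega) hsr).1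
  have hnov := fun s t => h.nonoverlap 1 s t (le_refl 1) (by norm_num)
  have harm₁ := h.mono 1 (le_refl 1) (by norm_num)
  have harm₂ := h.mono 2 (by norm_num) le_rfl
  have halt := h.alt 1 (le_refl 1) (by norm_num)
  simp only [Nat.sub_self, h.rr0, show 2 - 1 = 1 from rfl] at harm₁ harm₂ halt
  have hIcc : Set.Icc (rr 1 - 1 + 1) (rr 2) = Set.Icc (rr 1) r := by
    rw [hr₂, Nat.sub_add_cancel (by omega)]
  rcases harm₁ with hR | hL
  · obtain ⟨hlo₁, hhi₁⟩ := hR.strictMonoOn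
    obtain ⟨hlo₂, hhi₂⟩ := (halt.mp hR).strictAntiOn
    rw [hIcc] at hlo₂ hhi₂
    exact Or.inl ⟨hR, ⟨by omega, by omega, hlo₁, hhi₁, hlo₂, hhi₂, hov, hnov⟩⟩
  · have hR₂ := harm₂.resolve_right fun hL₂ => (halt.mpr hL₂).not_sLeft (by omega) hL
    obtain ⟨hlo₁, hhi₁⟩ := hL.strictAntiOn
    obtain ⟨hlo₂, hhi₂⟩ := hR₂.strictMonoOn
    rw [hIcc] at hlo₂ hhi₂
    refine Or.inr ⟨hL, ⟨by omega, by omega, hhi₁.neg, hlo₁.neg, hhi₂.neg, hlo₂.neg, ?_, ?_⟩⟩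
    · exact fun s hs hsr => overlap_neg_swap_iff.mpr (hov s hs hsr)
    · exact fun s t hs hsa hat htr => overlap_neg_swap_iff.not.mpr (hnov s t hs hsa hat htr)

theorem exists_cover_before (h : IsAltSnake n r 2 rr ii jj) (hc : SegConnected n ii jj 0 r)
    (hlt : ii (rr 1 - 1) < ii (rr 1 + 1)) : ∃ p, 1 ≤ p ∧ p < rr 1 ∧
      (∀ t, rr 1 < t → t ≤ r → ii p ≤ ii t ∧ ii t < jj t ∧ jj t ≤ jj p) ∧
      (1 < p → (SRight ii jj 0 (rr 1) → jj (p - 1) < ii r) ∧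
        (SLeft ii jj 0 (rr 1) → jj r < ii (p - 1))) := by
  rcases h.peak_or_valley hc with ⟨hR, hS⟩ | ⟨hL, hS⟩
  · obtain ⟨hlo, hhi⟩ := hS.nested_or.resolve_right (by omega)
    obtain ⟨p, hp, hpa, hcover, hbound⟩ := hS.exists_cover_before hlo hhi
    exact ⟨p, hp, hpa, hcover, fun hp₁ =>
      ⟨fun _ => hbound hp₁ r hS.lt le_rfl, fun hL => absurd hL (hR.not_sLeft hS.one_lt)⟩⟩
  · obtain ⟨hlo, hhi⟩ := hS.nested_or.resolve_right (by omega)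
    obtain ⟨p, hp, hpa, hcover, hbound⟩ := hS.exists_cover_before hlo hhi
    refine ⟨p, hp, hpa, fun t hat htr => ?_, fun hp₁ =>
      ⟨fun hR => absurd hL (hR.not_sLeft hS.one_lt), fun _ => ?_⟩⟩
    · have := hcover t hat htr
      omega
    · have := hbound hp₁ r hS.lt le_rfl
      omega

theorem exists_cover_after (h : IsAltSnake n r 2 rr ii jj) (hc : SegConnected n ii jj 0 r)
    (hlt : ii (rr 1 + 1) < ii (rr 1 - 1)) : ∃ p, rr 1 < p ∧ p ≤ r ∧
      (∀ s, 1 ≤ s → s < rr 1 → ii p ≤ ii s ∧ ii s < jj s ∧ jj s ≤ jj p) ∧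
      (p < r → (SRight ii jj 0 (rr 1) → jj (p + 1) < ii 1) ∧
        (SLeft ii jj 0 (rr 1) → jj 1 < ii (p + 1))) := by
  rcases h.peak_or_valley hc with ⟨hR, hS⟩ | ⟨hL, hS⟩
  · obtain ⟨hlo, hhi⟩ := hS.nested_or.resolve_left (by omega)
    obtain ⟨p, hp, hpa, hcover, hbound⟩ := hS.exists_cover_after hlo hhi
    exact ⟨p, hp, hpa, hcover, fun hpr =>
      ⟨fun _ => hbound hpr 1 le_rfl hS.one_lt, fun hL => absurd hL (hR.not_sLeft hS.one_lt)⟩⟩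
  · obtain ⟨hlo, hhi⟩ := hS.nested_or.resolve_left (by omega)
    obtain ⟨p, hp, hpa, hcover, hbound⟩ := hS.exists_cover_after hlo hhi
    refine ⟨p, hp, hpa, fun s hs hsa => ?_, fun hpr =>
      ⟨fun hR => absurd hL (hR.not_sLeft hS.one_lt), fun _ => ?_⟩⟩
    · have := hcover s hs hsa
      omega
    · have := hbound hpr 1 le_rfl hS.one_lt
      omega

end IsAltSnake

theorem stmt_9_general (n r : ℕ) (rr : ℕ → ℕ) (ii jj : ℕ → ℤ)
    (h : IsAltSnake n r 2 rr ii jj) (hc : SegConnected n ii jj 0 r)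
    (ε : ℕ) (hε : ε ≤ 1)
    (hlt : ii (rr 1 - 1 + 2 * ε) < ii (rr 1 + 1 - 2 * ε)) :
    ∃ p1, rr ε + ε ≤ p1 ∧ p1 < rr (1 + ε) + ε ∧
      (∀ s, rr (1 - ε) - ε < s → s ≤ rr (2 - ε) - ε →
        ii p1 ≤ ii s ∧ ii s < jj s ∧ jj s ≤ jj p1) ∧
      (1 ≤ p1 - 1 + 2 * ε → p1 - 1 + 2 * ε ≤ rr 2 →
        (SRight ii jj 0 (rr 1) → jj (p1 - 1 + 2 * ε) < ii (rr (2 - 2 * ε))) ∧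
        (SLeft ii jj 0 (rr 1) → jj (rr (2 - 2 * ε)) < ii (p1 - 1 + 2 * ε))) := by
  have h₀ : rr 0 = 1 := h.rr0
  have h₂ : rr 2 = r := h.rrk
  have h₁ : rr 0 < rr 1 := h.rrmono 0 (by norm_num)
  obtain rfl | rfl : ε = 0 ∨ ε = 1 := by omega
  · simp only [Nat.mul_zero, add_zero, Nat.sub_zero, h₀, h₂] at hlt ⊢
    obtain ⟨p, hp, hpa, hcover, hbound⟩ := h.exists_cover_before hc hlt
    exact ⟨p, hp, hpa, hcover, fun hp₁ _ => hbound (by omega)⟩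
  · simp only [Nat.mul_one, Nat.reduceSub, h₀, h₂] at hlt h₁ ⊢
    rw [show rr 1 - 1 + 2 = rr 1 + 1 by omega, show rr 1 + 1 - 2 = rr 1 - 1 by omega] at hlt
    obtain ⟨p, hp, hpr, hcover, hbound⟩ := h.exists_cover_after hc hlt
    refine ⟨p, hp, by omega, fun s hs hsa => hcover s (by omega) (by omega), fun _ hpr' => ?_⟩
    rw [show p - 1 + 2 = p + 1 by omega]
    exact hbound (by omega)

/-- Proposition (structure1 (iii)): for a connected alternating snake with
`r(𝐬) = (1, r_1, r_2)` and `ε ∈ {0,1}`, if `i_{r_1−1+2ε} < i_{r_1+1−2ε}` then there is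
`r_ε + ε ≤ p_1 < r_{1+ε} + ε` with `i_{p_1} ≤ i_s < j_s ≤ j_{p_1}` for all
`r_{1−ε} − ε < s ≤ r_{2−ε} − ε`, and whenever `p_1 − 1 + 2ε ∈ {1,…,r_2}`:
`𝐬(0,r_1) ∈ S_→` implies `j_{p_1−1+2ε} < i_{r_{2−2ε}}`, and `𝐬(0,r_1) ∈ S_←` implies
`j_{r_{2−2ε}} < i_{p_1−1+2ε}`. -/
theorem stmt_9 (n r : ℕ) (hn : 1 ≤ n) (rr : ℕ → ℕ) (ii jj : ℕ → ℤ)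
    (h : IsAltSnake n r 2 rr ii jj) (hc : SegConnected n ii jj 0 r)
    (ε : ℕ) (hε : ε ≤ 1)
    (hlt : ii (rr 1 - 1 + 2 * ε) < ii (rr 1 + 1 - 2 * ε)) :
    ∃ p1, rr ε + ε ≤ p1 ∧ p1 < rr (1 + ε) + ε ∧
      (∀ s, rr (1 - ε) - ε < s → s ≤ rr (2 - ε) - ε →
        ii p1 ≤ ii s ∧ ii s < jj s ∧ jj s ≤ jj p1) ∧
      (1 ≤ p1 - 1 + 2 * ε → p1 - 1 + 2 * ε ≤ rr 2 →
        (SRight ii jj 0 (rr 1) → jj (p1 - 1 + 2 * ε) < ii (rr (2 - 2 * ε))) ∧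
        (SLeft ii jj 0 (rr 1) → jj (rr (2 - 2 * ε)) < ii (p1 - 1 + 2 * ε))) :=
  stmt_9_general n r rr ii jj h hc ε hε hlt

end AltSnakePaper
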